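/- arXiv:1501.03201 — 3 statements merged into one kernel-verified Lean document; each statement's English description precedes it below -/
import Mathlib

section
/- The map proj_R: R^{1|2} × S → R^{0|1} × S given by proj_R(t,θ₁,θ₂) = θ₁ - ρ₁·t/r, where t and r are even with r invertible and θ₁, θ₂, ρ₁ are odd, is invariant under the Z-action generated by μ_R(t,θ₁,θ₂) = (t + r + iθ₁ρ₁, θ₁ + ρ₁, -θ₂), i.e. proj_R ∘ μ_R = proj_R. -/
/-- Invariance of `proj_R(t,θ₁,θ₂) = θ₁ - ρ₁·t·r⁻¹` under the `ℤ`-action generated by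
`μ_R(t,θ₁,θ₂) = (t + r + iθ₁ρ₁, θ₁ + ρ₁, -θ₂)`, i.e. `proj_R ∘ μ_R = proj_R`.
Here `A` is a supercommutative algebra: `i` is central with `i² = -1`, `t, r` even
with `r` invertible (with inverse `rinv`), and `θ₁, θ₂, ρ₁` odd (so `ρ₁² = 0` and
`ρ₁` anticommutes with `θ₁`). -/
theorem proj_invariant {A : Type*} [Ring A]
    (I t r rinv θ₁ θ₂ ρ₁ : A)
    (hI : I * I = -1) (hIc : ∀ a : A, I * a = a * I)
    (hr : r * rinv = 1) (hr' : rinv * r = 1)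
    (hsq : ρ₁ * ρ₁ = 0) (hanti : ρ₁ * θ₁ = -(θ₁ * ρ₁)) :
    (θ₁ + ρ₁) - ρ₁ * (t + r + I * θ₁ * ρ₁) * rinv = θ₁ - ρ₁ * t * rinv := by
  have h1 : ρ₁ * (I * θ₁ * ρ₁) = 0 := by
    rw [show ρ₁ * (I * θ₁ * ρ₁) = I * (ρ₁ * θ₁ * ρ₁) by
      rw [show ρ₁ * (I * θ₁ * ρ₁) = (ρ₁ * I) * (θ₁ * ρ₁) by noncomm_ring, ← hIc]
      noncomm_ring, hanti,
      show I * (-(θ₁ * ρ₁) * ρ₁) = -(I * θ₁ * (ρ₁ * ρ₁)) by noncomm_ring, hsq]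
    noncomm_ring
  rw [show ρ₁ * (t + r + I * θ₁ * ρ₁) * rinv
      = ρ₁ * t * rinv + ρ₁ * (r * rinv) + ρ₁ * (I * θ₁ * ρ₁) * rinv by noncomm_ring,
    hr, h1, mul_one, zero_mul]
  noncomm_ring
end

section
/- Product formula for sinh: for all complex x, sinh(x/2) = (x/2)·∏_{k=1}^∞ (1 + (x/(2πk))²), where the infinite product converges. -/
/-! With `z = x / (2π)` this is Euler's product `sinh (π z) = π z ∏ (1 + z² / n²)`, which is
Mathlib's Euler sine product evaluated at `z * I`, since `sin (i w) = i sinh w`. -/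

open Real

namespace Complex

theorem summable_div_nat_add_one_sq (w : ℂ) : Summable fun n : ℕ => w / ((n : ℂ) + 1) ^ 2 := by
  simpa only [Nat.cast_one] using (summable_pow_div_add w 2 1 one_lt_two).of_norm

theorem multipliable_one_add_sq_div_sq (z : ℂ) :
    Multipliable fun n : ℕ => 1 + z ^ 2 / ((n : ℂ) + 1) ^ 2 :=
  Complex.multipliable_one_add_of_summable (summable_div_nat_add_one_sq _)

theorem multipliable_one_sub_sq_div_sq (z : ℂ) :
    Multipliable fun n : ℕ => 1 - z ^ 2 / ((n : ℂ) + 1) ^ 2 := by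
  simpa only [mul_pow, I_sq, mul_neg_one, neg_div, ← sub_eq_add_neg] using
    multipliable_one_add_sq_div_sq (z * I)

theorem sin_pi_mul_eq_mul_tprod (z : ℂ) :
    sin (π * z) = π * z * ∏' n : ℕ, (1 - z ^ 2 / ((n : ℂ) + 1) ^ 2) :=
  tendsto_nhds_unique (tendsto_euler_sin_prod z)
    ((multipliable_one_sub_sq_div_sq z).hasProd.tendsto_prod_nat.const_mul _)

theorem sinh_pi_mul_eq_mul_tprod (z : ℂ) :
    sinh (π * z) = π * z * ∏' n : ℕ, (1 + z ^ 2 / ((n : ℂ) + 1) ^ 2) := by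
  have h := sin_pi_mul_eq_mul_tprod (z * I)
  simp only [← mul_assoc, sin_mul_I, mul_pow, I_sq, mul_neg_one, neg_div, sub_neg_eq_add] at h
  exact mul_right_cancel₀ I_ne_zero (h.trans (mul_right_comm _ _ _))

end Complex

/-- Product formula for `sinh`: for all complex `x`,
`sinh(x/2) = (x/2)·∏_{k=1}^∞ (1 + (x/(2πk))²)`, the infinite product converging. -/
theorem sinh_product (x : ℂ) :
    Multipliable (fun k : ℕ => 1 + (x / (2 * (Real.pi : ℂ) * ((k : ℂ) + 1))) ^ 2) ∧
    Complex.sinh (x / 2)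
      = (x / 2) * ∏' k : ℕ, (1 + (x / (2 * (Real.pi : ℂ) * ((k : ℂ) + 1))) ^ 2) := by
  set z : ℂ := x / (2 * Real.pi)
  have hz : Real.pi * z = x / 2 := by simp only [z]; field_simp
  have hfactor : (fun k : ℕ => 1 + (x / (2 * (Real.pi : ℂ) * ((k : ℂ) + 1))) ^ 2)
      = fun k : ℕ => 1 + z ^ 2 / ((k : ℂ) + 1) ^ 2 := by
    ext k
    rw [div_mul_eq_div_div, div_pow]
  rw [hfactor, ← hz]
  exact ⟨Complex.multipliable_one_add_sq_div_sq z, Complex.sinh_pi_mul_eq_mul_tprod z⟩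
end

section
/- For real x with |x| < 2π, sinh(x/2)/(x/2) = exp( -Σ_{k=1}^∞ x^{2k}/(2k(2πi)^{2k}) · 2ζ(2k) ), where ζ is the Riemann zeta function. Equivalently, log(sinh(x/2)/(x/2)) = Σ_{k=1}^∞ (-1)^{k+1} ζ(2k) x^{2k} / (k (2π)^{2k}). -/
/-!
Euler's product `sin (π z) = π z ∏ (1 - z² / n²)` at `z = i y / π` gives
`sinh y / y = ∏ (1 + c n)` with `c n = (y / (π n))²`; all factors are `≥ 1`, so taking logarithms
gives `log (sinh y / y) = ∑ₙ log (1 + c n)`. Expanding each `log (1 + c n)` by Mercator's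
series and exchanging the two sums, which is legitimate for `|y| < π` since then
`|c n| ≤ (y / π)² < 1` and `∑ c n < ∞`, collects the power sums `∑ₙ c n ^ k = (y / π) ^ (2k) ζ(2k)`.
-/

open Filter Topology Finset Real

namespace Real

lemma hasSum_log_one_add_of_abs_lt_one {c : ℝ} (hc : |c| < 1) :
    HasSum (fun k : ℕ => (-1) ^ k * c ^ (k + 1) / (k + 1)) (log (1 + c)) := by
  have h := (hasSum_pow_div_log_of_abs_lt_one (x := -c) (by rwa [abs_neg])).neg
  rw [sub_neg_eq_add, neg_neg] at h
  refine h.congr_fun fun k => ?_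
  rw [neg_pow]
  ring

lemma hasSum_log_of_tendsto_prod {f : ℕ → ℝ} {p : ℝ} (hf : ∀ n, 1 ≤ f n)
    (hp : Tendsto (fun N => ∏ i ∈ range N, f i) atTop (𝓝 p)) :
    HasSum (fun n => log (f n)) (log p) := by
  have hp1 : 1 ≤ p := ge_of_tendsto' hp fun N => one_le_prod fun i _ => hf i
  rw [hasSum_iff_tendsto_nat_of_nonneg (fun n => log_nonneg (hf n))]
  refine ((continuousAt_log (by positivity)).tendsto.comp hp).congr fun N => ?_
  rw [Function.comp_apply, log_prod fun i _ => by linarith [hf i]]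

lemma tendsto_euler_sinh_prod (y : ℝ) :
    Tendsto (fun N : ℕ => y * ∏ j ∈ range N, (1 + (y / π) ^ 2 / ((j : ℝ) + 1) ^ 2)) atTop
      (𝓝 (sinh y)) := by
  have h := Complex.tendsto_euler_sin_prod (y / π * Complex.I)
  have hyI : (π : ℂ) * (y / π * Complex.I) = y * Complex.I := by
    field_simp [Complex.ofReal_ne_zero.mpr pi_ne_zero]
  have hprod (N : ℕ) :
      π * (y / π * Complex.I) * ∏ j ∈ range N, (1 - (y / π * Complex.I) ^ 2 / ((j : ℂ) + 1) ^ 2)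
        = ((y * ∏ j ∈ range N, (1 + (y / π) ^ 2 / ((j : ℝ) + 1) ^ 2) : ℝ) : ℂ) * Complex.I := by
    push_cast
    simp only [hyI, mul_pow, Complex.I_sq, mul_neg_one, neg_div, sub_neg_eq_add]
    ring
  simp_rw [hprod, hyI, Complex.sin_mul_I, ← Complex.ofReal_sinh] at h
  simpa only [Function.comp_def, Complex.mul_I_im, Complex.ofReal_re] using
    (Complex.continuous_im.tendsto _).comp h

lemma hasSum_log_sinh_div (y : ℝ) :
    HasSum (fun n : ℕ => log (1 + (y / π) ^ 2 / ((n : ℝ) + 1) ^ 2)) (log (sinh y / y)) := by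
  rcases eq_or_ne y 0 with rfl | hy
  · -- both sides vanish, as `sinh 0 / 0 = 0` and `log 0 = 0`
    simp
  refine hasSum_log_of_tendsto_prod (fun n => le_add_of_nonneg_right (by positivity)) ?_
  refine ((tendsto_euler_sinh_prod y).div_const y).congr fun N => ?_
  field_simp

end Real

section LogSeries

variable {c : ℕ → ℝ} {r : ℝ}

lemma summable_log_one_add_series (hr : r < 1) (hcr : ∀ n, |c n| ≤ r) (hc : Summable c) :
    Summable fun p : ℕ × ℕ => (-1 : ℝ) ^ p.1 * c p.2 ^ (p.1 + 1) / (p.1 + 1) := by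
  have hr0 : 0 ≤ r := (abs_nonneg _).trans (hcr 0)
  have hbound : Summable fun p : ℕ × ℕ => r ^ p.1 * |c p.2| :=
    (summable_geometric_of_lt_one hr0 hr).mul_of_nonneg hc.abs (fun _ => by positivity)
      fun _ => abs_nonneg _
  refine .of_norm_bounded hbound fun ⟨k, n⟩ => ?_
  calc ‖(-1 : ℝ) ^ k * c n ^ (k + 1) / (k + 1)‖ = |c n| ^ k * |c n| / (k + 1) := by
        simp [pow_succ, abs_of_nonneg (by positivity : (0 : ℝ) ≤ k + 1)]
    _ ≤ |c n| ^ k * |c n| := div_le_self (by positivity) (by simp)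
    _ ≤ r ^ k * |c n| := by gcongr; exact hcr n

lemma tsum_log_one_add_eq_tsum_tsum_pow (hr : r < 1) (hcr : ∀ n, |c n| ≤ r) (hc : Summable c) :
    ∑' n, log (1 + c n) = ∑' k : ℕ, (-1) ^ k * (∑' n, c n ^ (k + 1)) / (k + 1) := by
  have hinner (n : ℕ) := (hasSum_log_one_add_of_abs_lt_one ((hcr n).trans_lt hr)).tsum_eq
  have hterm (k : ℕ) : (-1 : ℝ) ^ k * (∑' n, c n ^ (k + 1)) / (k + 1)
      = ∑' n, (-1) ^ k * c n ^ (k + 1) / (k + 1) := by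
    rw [tsum_div_const, tsum_mul_left]
  rw [tsum_congr hterm, ← (summable_log_one_add_series hr hcr hc).tsum_comm, tsum_congr hinner]

end LogSeries

/-- For real `x` with `|x| < 2π`,
`log(sinh(x/2)/(x/2)) = Σ_{k=1}^∞ (-1)^{k+1} ζ(2k) x^{2k} / (k(2π)^{2k})`,
equivalently `sinh(x/2)/(x/2) = exp(-Σ_{k=1}^∞ x^{2k}/(2k(2πi)^{2k})·2ζ(2k))`,
where `ζ(2k) = Σ_{n=1}^∞ n^{-2k}` is the Riemann zeta function. -/
theorem log_sinh_div (x : ℝ) (hx : |x| < 2 * Real.pi) :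
    Real.log (Real.sinh (x / 2) / (x / 2))
      = ∑' k : ℕ, (-1 : ℝ) ^ k * (∑' n : ℕ, 1 / ((n : ℝ) + 1) ^ (2 * (k + 1)))
          * x ^ (2 * (k + 1)) / ((k + 1) * (2 * Real.pi) ^ (2 * (k + 1))) := by
  set a := (x / (2 * π)) ^ 2
  have ha : a < 1 := by
    rw [sq_lt_one_iff_abs_lt_one, abs_div, abs_of_pos two_pi_pos]
    exact (div_lt_one two_pi_pos).mpr hx
  have hca (n : ℕ) : |a / ((n : ℝ) + 1) ^ 2| ≤ a := by
    rw [abs_of_nonneg (by positivity)]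
    exact div_le_self (by positivity) (one_le_pow₀ (by simp))
  have hc : Summable fun n : ℕ => a / ((n : ℝ) + 1) ^ 2 := by
    have := (summable_nat_add_iff 1).mpr (summable_one_div_nat_pow.mpr one_lt_two)
    simpa [div_eq_mul_one_div a] using this.mul_left a
  have hxa : (x / 2 / π) ^ 2 = a := by ring
  rw [← (hasSum_log_sinh_div (x / 2)).tsum_eq, hxa, tsum_log_one_add_eq_tsum_tsum_pow ha hca hc]
  refine tsum_congr fun k => ?_
  have hpow (n : ℕ) : (a / ((n : ℝ) + 1) ^ 2) ^ (k + 1)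
      = (x / (2 * π)) ^ (2 * (k + 1)) * (1 / ((n : ℝ) + 1) ^ (2 * (k + 1))) := by
    rw [div_pow, pow_mul, pow_mul]
    ring
  rw [tsum_congr hpow, tsum_mul_left, div_pow]
  field_simp
end
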